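/- For all integers k ≥ 1 and odd n = 2p − 1 with 1 ≤ p ≤ k: Π_{i=0}^{k−1}((n/2) − i) ≤ (n/2)·(k−1)!, where n/2 is taken in ℝ (or ℚ). -/
import Mathlib


open Finset

lemma prod_sub_eq_factorial (m : ℕ) : ∏ i ∈ range m, (m - i) = m.factorial := by
  induction m with
  | zero => simp
  | succ m ih =>
    rw [Finset.prod_range_succ' (fun i => m + 1 - i) m]
    simp only [Nat.succ_sub_succ]
    rw [ih, Nat.sub_zero, Nat.factorial_succ, mul_comm]

theorem stmt_13 (k p n : ℕ) (hk : 1 ≤ k) (hp : 1 ≤ p) (hpk : p ≤ k)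
    (hn : n = 2 * p - 1) :
    ∏ i ∈ range k, ((n : ℝ) / 2 - i) ≤ ((n : ℝ) / 2) * ((k - 1).factorial : ℝ) := by
  have hnr : (n : ℝ) = 2 * p - 1 := by
    subst hn
    have : (2 * p - 1 : ℕ) = 2 * p - 1 := rfl
    push_cast [Nat.cast_sub (by omega : 1 ≤ 2 * p)]
    ring
  have hx : (n : ℝ) / 2 = (p : ℝ) - 1 / 2 := by rw [hnr]; ring
  set x : ℝ := (n : ℝ) / 2 with hxdef
  -- pointwise nat bound
  set g : ℕ → ℕ := fun i => if i < p then p - i else i - p + 1 with hg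
  have hpt : ∀ i ∈ Ico 1 k, |x - i| ≤ (g i : ℝ) := by
    intro i hi
    simp only [hg]
    rcases lt_or_ge i p with h | h
    · have h1 : (i : ℝ) + 1 ≤ p := by exact_mod_cast h
      rw [if_pos h, abs_of_nonneg (by rw [hx]; linarith), hx, Nat.cast_sub h.le]
      linarith
    · have h1 : (p : ℝ) ≤ i := by exact_mod_cast h
      rw [if_neg (not_lt.2 h), abs_of_nonpos (by rw [hx]; linarith), hx,
        Nat.cast_add, Nat.cast_sub h]
      push_cast
      linarith
  have hstep1 : ∏ i ∈ range k, (x - i) ≤ ∏ i ∈ range k, |x - i| := by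
    calc ∏ i ∈ range k, (x - i) ≤ |∏ i ∈ range k, (x - i)| := le_abs_self _
    _ = ∏ i ∈ range k, |x - i| := Finset.abs_prod _ _
  have hsplit : ∏ i ∈ range k, |x - i| = |x| * ∏ i ∈ Ico 1 k, |x - i| := by
    rw [Finset.range_eq_Ico, ← Finset.prod_Ico_consecutive _ (Nat.zero_le 1) hk]
    congr 1
    simp
  have hxpos : 0 ≤ x := by
    rw [hx]
    have : (1 : ℝ) ≤ p := by exact_mod_cast hp
    linarith
  have hstep2 : ∏ i ∈ Ico 1 k, |x - i| ≤ (((p-1).factorial * (k-p).factorial : ℕ) : ℝ) := by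
    calc ∏ i ∈ Ico 1 k, |x - i| ≤ ∏ i ∈ Ico 1 k, (g i : ℝ) :=
        Finset.prod_le_prod (fun i _ => abs_nonneg _) hpt
    _ = ((∏ i ∈ Ico 1 k, g i : ℕ) : ℝ) := by push_cast; rfl
    _ = _ := by
        congr 1
        rw [← Finset.prod_Ico_consecutive _ hp hpk]
        have h1 : ∏ i ∈ Ico 1 p, g i = (p-1).factorial := by
          rw [Finset.prod_Ico_eq_prod_range]
          have : ∀ i ∈ range (p - 1), g (1 + i) = (p - 1) - i := by
            intro i hi
            simp only [hg]
            rw [if_pos (by simp at hi; omega)]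
            omega
          rw [Finset.prod_congr rfl this, prod_sub_eq_factorial]
        have h2 : ∏ i ∈ Ico p k, g i = (k-p).factorial := by
          rw [Finset.prod_Ico_eq_prod_range]
          have : ∀ i ∈ range (k - p), g (p + i) = i + 1 := by
            intro i hi
            simp only [hg]
            rw [if_neg (by omega)]
            omega
          rw [Finset.prod_congr rfl this, Finset.prod_range_add_one_eq_factorial]
        rw [h1, h2]
  have hfact : (p-1).factorial * (k-p).factorial ≤ (k-1).factorial := by
    have hd := Nat.factorial_mul_factorial_dvd_factorial_add (p-1) (k-p)
    have he : (p-1) + (k-p) = k - 1 := by omega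
    rw [he] at hd
    exact Nat.le_of_dvd (Nat.factorial_pos _) hd
  calc ∏ i ∈ range k, (x - i) ≤ ∏ i ∈ range k, |x - i| := hstep1
  _ = |x| * ∏ i ∈ Ico 1 k, |x - i| := hsplit
  _ = x * ∏ i ∈ Ico 1 k, |x - i| := by rw [abs_of_nonneg hxpos]
  _ ≤ x * (((p-1).factorial * (k-p).factorial : ℕ) : ℝ) := by
      apply mul_le_mul_of_nonneg_left hstep2 hxpos
  _ ≤ x * ((k-1).factorial : ℝ) := by
      apply mul_le_mul_of_nonneg_left _ hxpos
      exact_mod_cast hfact
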